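/- arXiv:1905.10265 — 3 statements merged into one kernel-verified Lean document; each statement's English description precedes it below -/
import Mathlib

section
/- Let $a : \mathbb{Z} \to \mathbb{C}$ satisfy $|a_\nu| \le C\, m(\nu)$ where $m$ is positive, even, and $(1+|\nu|)m(\nu) \in \ell^1$. Let $P_N$ be the $N \times N$ Toeplitz matrix with entries $P_N(j,k) = a^N_{j-k}$ ($a^N_\nu = 1_{[-N,N]}(\nu) a_\nu$), and let $\widetilde{P}_N$ be the matrix indexed by $I_N = [0,N) \subset \mathbb{Z}/(N+M)\mathbb{Z}$ with entries $\widetilde{P}_N(j,k) = \sum_{\nu \equiv j-k \bmod (N+M)} a^N_\nu$. Then the trace-class (nuclear) norm satisfies $\|P_N - \widetilde{P}_N\|_{\mathrm{tr}} \le 2C \sum_{k=M}^{\infty} (k+1-M) m(k)$, uniformly in $N$. -/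
/-!
For `d = j - k` we have `|d| < N ≤ N + M`, so among the `ν ≡ d [ZMOD N + M]` only
`d - (N + M)`, `d` and `d + (N + M)` can lie in the support `[-N, N]` of `a^N`. Hence
`P_N - P̃_N` has entries `-(a^N_{d - (N+M)} + a^N_{d + (N+M)})`, both controlled by `C m` at
distance at least `M` from the origin. The trace norm is at most the `ℓ¹` norm of the entries, and
the evenness of `m` folds the two tails into one, in which `m (M + n)` is hit by at most `n + 1`
pairs `(j, k)`.
-/

open scoped Matrix.Norms.L2Operator

/-- The trace (nuclear) norm of a square complex matrix: the sum of its singular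
values, i.e. of the square roots of the eigenvalues of `Aᴴ * A`. -/
noncomputable def traceNorm {n : ℕ} (A : Matrix (Fin n) (Fin n) ℂ) : ℝ :=
  ∑ i, Real.sqrt ((Matrix.isHermitian_conjTranspose_mul_self A).eigenvalues i)

open Matrix Finset ComplexConjugate

section

variable {𝕜 : Type*} [RCLike 𝕜] {ι m n : Type*} [Fintype ι] [Fintype m] [Fintype n]

lemma Orthonormal.sum_norm_apply_sq_le_one {v : ι → EuclideanSpace 𝕜 n}
    (hv : Orthonormal 𝕜 v) (j : n) : ∑ i, ‖v i j‖ ^ 2 ≤ 1 := by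
  classical
  simpa [EuclideanSpace.inner_single_right] using
    hv.sum_inner_products_le (s := univ) (EuclideanSpace.single j (1 : 𝕜))

lemma Orthonormal.norm_sum_conj_mul_le_one {v : ι → EuclideanSpace 𝕜 m}
    {w : ι → EuclideanSpace 𝕜 n} (hv : Orthonormal 𝕜 v) (hw : Orthonormal 𝕜 w) (j : m) (k : n) :
    ‖∑ i, conj (v i j) * w i k‖ ≤ 1 :=
  calc ‖∑ i, conj (v i j) * w i k‖
      ≤ ∑ i, ‖v i j‖ * ‖w i k‖ := by
        simpa only [norm_mul, RCLike.norm_conj] using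
          norm_sum_le univ fun i => conj (v i j) * w i k
    _ ≤ ∑ i, (‖v i j‖ ^ 2 + ‖w i k‖ ^ 2) / 2 :=
        sum_le_sum fun i _ => by nlinarith [sq_nonneg (‖v i j‖ - ‖w i k‖)]
    _ ≤ 1 := by
        rw [← sum_div, sum_add_distrib]
        linarith [hv.sum_norm_apply_sq_le_one j, hw.sum_norm_apply_sq_le_one k]

lemma Orthonormal.norm_sum_inner_toEuclideanLin_le [DecidableEq n]
    {v : ι → EuclideanSpace 𝕜 m} {w : ι → EuclideanSpace 𝕜 n}
    (hv : Orthonormal 𝕜 v) (hw : Orthonormal 𝕜 w) (A : Matrix m n 𝕜) :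
    ‖∑ i, inner 𝕜 (v i) (toEuclideanLin A (w i))‖ ≤ ∑ j, ∑ k, ‖A j k‖ := by
  have expand : ∑ i, inner 𝕜 (v i) (toEuclideanLin A (w i))
      = ∑ j, ∑ k, A j k * ∑ i, conj (v i j) * w i k := by
    simp only [toLpLin_apply, PiLp.inner_apply, RCLike.inner_apply, mulVec, dotProduct,
      mul_sum, sum_mul]
    rw [sum_comm]
    refine sum_congr rfl fun j _ => ?_
    rw [sum_comm]
    exact sum_congr rfl fun k _ => sum_congr rfl fun i _ => by ring
  rw [expand]
  refine (norm_sum_le _ _).trans (sum_le_sum fun j _ => ?_)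
  refine (norm_sum_le _ _).trans (sum_le_sum fun k _ => ?_)
  rw [norm_mul]
  exact mul_le_of_le_one_right (norm_nonneg _) (hv.norm_sum_conj_mul_le_one hw j k)

lemma inner_toEuclideanLin_eigenvectorBasis [DecidableEq m] [DecidableEq n] (A : Matrix m n 𝕜)
    (i j : n) :
    inner 𝕜 (toEuclideanLin A ((isHermitian_conjTranspose_mul_self A).eigenvectorBasis i))
        (toEuclideanLin A ((isHermitian_conjTranspose_mul_self A).eigenvectorBasis j))
      = (isHermitian_conjTranspose_mul_self A).eigenvalues j
          * inner 𝕜 ((isHermitian_conjTranspose_mul_self A).eigenvectorBasis i)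
            ((isHermitian_conjTranspose_mul_self A).eigenvectorBasis j) := by
  rw [← LinearMap.adjoint_inner_right, ← toEuclideanLin_conjTranspose_eq_adjoint,
    ← LinearMap.comp_apply, ← toLpLin_mul_same, toLpLin_apply,
    (isHermitian_conjTranspose_mul_self A).mulVec_eigenvectorBasis j, WithLp.toLp_smul,
    WithLp.toLp_ofLp, inner_smul_right_eq_smul, RCLike.real_smul_eq_coe_mul]

lemma norm_toEuclideanLin_eigenvectorBasis [DecidableEq m] [DecidableEq n] (A : Matrix m n 𝕜)
    (i : n) :
    ‖toEuclideanLin A ((isHermitian_conjTranspose_mul_self A).eigenvectorBasis i)‖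
      = √((isHermitian_conjTranspose_mul_self A).eigenvalues i) := by
  rw [← Real.sqrt_sq (norm_nonneg _), @norm_sq_eq_re_inner 𝕜,
    inner_toEuclideanLin_eigenvectorBasis, inner_self_eq_norm_sq_to_K,
    (isHermitian_conjTranspose_mul_self A).eigenvectorBasis.orthonormal.1 i]
  simp

end

lemma exists_orthonormalBasis_inner_eq_norm {𝕜 E : Type*} [RCLike 𝕜] [NormedAddCommGroup E]
    [InnerProductSpace 𝕜 E] [FiniteDimensional 𝕜 E] {n : ℕ} (h : Module.finrank 𝕜 E = n)
    {u : Fin n → E} (hu : Pairwise fun i j => inner 𝕜 (u i) (u j) = 0) :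
    ∃ b : OrthonormalBasis (Fin n) 𝕜 E, ∀ i, inner 𝕜 (b i) (u i) = (‖u i‖ : 𝕜) := by
  refine ⟨InnerProductSpace.gramSchmidtOrthonormalBasis (by simpa using h) u, fun i => ?_⟩
  rcases eq_or_ne (u i) 0 with hi | hi
  · simp [hi]
  · rw [InnerProductSpace.gramSchmidtOrthonormalBasis_apply_of_orthogonal _ hu hi,
      inner_smul_left, inner_self_eq_norm_sq_to_K, RCLike.conj_inv, RCLike.conj_ofReal]
    have : (‖u i‖ : 𝕜) ≠ 0 := by simpa using hi
    field_simp

/-- With `w` an orthonormal eigenbasis of `Aᴴ * A`, the vectors `A w i` are orthogonal of norms the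
singular values; pairing them with an orthonormal basis `v` through their directions writes
`traceNorm A` as `∑ i, ⟪v i, A w i⟫`. -/
lemma traceNorm_le_sum_norm {n : ℕ} (A : Matrix (Fin n) (Fin n) ℂ) :
    traceNorm A ≤ ∑ j, ∑ k, ‖A j k‖ := by
  set w := (isHermitian_conjTranspose_mul_self A).eigenvectorBasis
  set u := fun i => toEuclideanLin A (w i)
  have hu : Pairwise fun i j => inner ℂ (u i) (u j) = 0 := fun i j hij => by
    simp [u, w, inner_toEuclideanLin_eigenvectorBasis, w.orthonormal.2 hij]
  obtain ⟨v, hv⟩ := exists_orthonormalBasis_inner_eq_norm finrank_euclideanSpace_fin hu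
  calc traceNorm A = ∑ i, ‖u i‖ := by
        simp only [traceNorm, u, w, norm_toEuclideanLin_eigenvectorBasis]
    _ = RCLike.re (∑ i, inner ℂ (v i) (u i)) := by simp [hv]
    _ ≤ ‖∑ i, inner ℂ (v i) (u i)‖ := RCLike.re_le_norm _
    _ ≤ ∑ j, ∑ k, ‖A j k‖ := v.orthonormal.norm_sum_inner_toEuclideanLin_le w.orthonormal A

lemma eq_sub_or_eq_or_eq_add_of_intCast_eq {T N : ℕ} (hNT : N ≤ T) {ν d : ℤ}
    (hν : |ν| ≤ N) (hd : |d| < N) (h : (ν : ZMod T) = d) :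
    ν = d - T ∨ ν = d ∨ ν = d + T := by
  obtain ⟨t, ht⟩ := (ZMod.intCast_eq_intCast_iff_dvd_sub d ν T).mp h.symm
  rw [abs_le] at hν
  rw [abs_lt] at hd
  have hT : (N : ℤ) ≤ T := by exact_mod_cast hNT
  have ht_lt : t < 2 := by nlinarith
  have ht_gt : -2 < t := by nlinarith
  interval_cases t <;> [left; (right; left); (right; right)] <;> linarith

lemma tsum_ite_intCast_eq_of_abs_le {α : Type*} [AddCommMonoid α] [TopologicalSpace α]
    {T N : ℕ} (hNT : N ≤ T) {f : ℤ → α} (hf : ∀ ν, (N : ℤ) < |ν| → f ν = 0) {d : ℤ}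
    (hd : |d| < N) :
    ∑' ν : ℤ, (if (ν : ZMod T) = d then f ν else 0) = f (d - T) + f d + f (d + T) := by
  have hT : (0 : ℤ) < T := by have := abs_nonneg d; omega
  rw [tsum_eq_sum (s := {d - T, d, d + T}), sum_insert (by simp; omega),
    sum_insert (by simp; omega), sum_singleton]
  · simp [add_assoc]
  · intro ν hν
    simp only [mem_insert, mem_singleton, not_or] at hν
    split_ifs with h
    · refine hf ν (not_le.mp fun hνN => ?_)
      rcases eq_sub_or_eq_or_eq_add_of_intCast_eq hNT hνN hd h with h' | h' | h' <;> tauto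
    · rfl

lemma norm_sub_tsum_ite_intCast_le {E : Type*} [NormedAddCommGroup E] {N T : ℕ} (hNT : N ≤ T)
    {f : ℤ → E} (hf : ∀ ν, (N : ℤ) < |ν| → f ν = 0) {g : ℤ → ℝ} (hfg : ∀ ν, ‖f ν‖ ≤ g ν)
    (hg : ∀ ν, g (-ν) = g ν) {d : ℤ} (hd : |d| < N) :
    ‖f d - ∑' ν : ℤ, (if (ν : ZMod T) = d then f ν else 0)‖ ≤ g (d + T) + g (-d + T) := by
  rw [tsum_ite_intCast_eq_of_abs_le hNT hf hd, ← hg (-d + T), neg_add, neg_neg, ← sub_eq_add_neg]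
  calc ‖f d - (f (d - T) + f d + f (d + T))‖ = ‖f (d + T) + f (d - T)‖ := by
        rw [← norm_neg]; congr 1; abel
    _ ≤ g (d + T) + g (d - T) := (norm_add_le _ _).trans (add_le_add (hfg _) (hfg _))

lemma sum_fin_sum_fin_sub_add_le_tsum {N M : ℕ} {g : ℤ → ℝ} (hg : ∀ ν, 0 ≤ g ν)
    (hs : Summable fun n : ℕ => ((n : ℝ) + 1) * g (M + n)) :
    ∑ j : Fin N, ∑ k : Fin N, g (j - k + (N + M)) ≤ ∑' n : ℕ, ((n : ℝ) + 1) * g (M + n) := by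
  set F : Fin N × Fin N → ℕ := fun p => p.1 + N - p.2
  have hF : ∀ p : Fin N × Fin N, (p.1 : ℤ) - p.2 + (N + M) = M + (F p : ℕ) := fun p => by
    push_cast [F, Nat.sub_add_cancel, show (p.2 : ℕ) ≤ p.1 + N by omega]
    ring
  have hfiber : ∀ n, #{p | F p = n} ≤ n + 1 := fun n => by
    simpa using card_le_card_of_injOn (fun p : Fin N × Fin N => (p.1 : ℕ)) (t := range (n + 1))
      (fun p hp => by simp [F] at hp ⊢; omega)
      (fun p hp q hq hpq => by
        simp [F] at hp hq hpq
        ext <;> omega)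
  calc ∑ j : Fin N, ∑ k : Fin N, g (j - k + (N + M)) = ∑ p, g (M + (F p : ℕ)) := by
        rw [← Fintype.sum_prod_type']
        simp only [hF]
    _ = ∑ n ∈ univ.image F, #{p | F p = n} • g (M + n) := sum_comp (fun n : ℕ => g (M + n)) F
    _ ≤ ∑ n ∈ univ.image F, ((n : ℝ) + 1) * g (M + n) := sum_le_sum fun n _ => by
        rw [nsmul_eq_mul]
        exact mul_le_mul_of_nonneg_right (by exact_mod_cast hfiber n) (hg _)
    _ ≤ ∑' n : ℕ, ((n : ℝ) + 1) * g (M + n) :=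
        hs.sum_le_tsum _ fun n _ => by positivity [hg (M + n)]

lemma summable_succ_mul_comp_add {m : ℤ → ℝ} (hm : ∀ ν, 0 ≤ m ν)
    (hm_sum : Summable fun ν : ℤ => (1 + |(ν : ℝ)|) * m ν) (M : ℕ) :
    Summable fun n : ℕ => ((n : ℝ) + 1) * m (M + n) := by
  refine .of_nonneg_of_le (fun n => by positivity [hm (M + n)]) (fun n => ?_)
    (hm_sum.comp_injective (add_right_injective (M : ℤ) |>.comp Nat.cast_injective))
  refine mul_le_mul_of_nonneg_right ?_ (hm _)
  simp only [Function.comp_apply, Int.cast_add, Int.cast_natCast]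
  rw [abs_of_nonneg (by positivity)]
  linarith [(M.cast_nonneg : (0 : ℝ) ≤ M)]

theorem statement_3_general (N M : ℕ) (a : ℤ → ℂ) (m : ℤ → ℝ) (C : ℝ)
    (hm_pos : ∀ ν, 0 < m ν) (hm_even : ∀ ν, m (-ν) = m ν)
    (hm_sum : Summable fun ν : ℤ => (1 + |(ν : ℝ)|) * m ν)
    (ha : ∀ ν, ‖a ν‖ ≤ C * m ν)
    (aN : ℤ → ℂ) (haN : ∀ ν : ℤ, aN ν = if |ν| ≤ (N : ℤ) then a ν else 0)
    (P : Matrix (Fin N) (Fin N) ℂ)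
    (hP : ∀ j k : Fin N, P j k = aN ((j : ℤ) - (k : ℤ)))
    (Pt : Matrix (Fin N) (Fin N) ℂ)
    (hPt : ∀ j k : Fin N, Pt j k =
      ∑' ν : ℤ, if (ν : ZMod (N + M)) = (((j : ℤ) - (k : ℤ) : ℤ) : ZMod (N + M))
        then aN ν else 0) :
    traceNorm (P - Pt) ≤ 2 * C * ∑' k : ℕ, ((k : ℝ) + 1) * m ((M : ℤ) + (k : ℤ)) := by
  have hm : ∀ ν, 0 ≤ m ν := fun ν => (hm_pos ν).le
  have hC : 0 ≤ C := nonneg_of_mul_nonneg_left ((norm_nonneg _).trans (ha 0)) (hm_pos 0)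
  have haN_le : ∀ ν, ‖aN ν‖ ≤ C * m ν := fun ν => by
    rw [haN]
    split_ifs
    · exact ha ν
    · simpa using mul_nonneg hC (hm ν)
  have hentry : ∀ j k : Fin N, ‖(P - Pt) j k‖
      ≤ C * m (j - k + (N + M)) + C * m (-(j - k) + (N + M)) := fun j k => by
    have hjk : |(j : ℤ) - k| < N := by rw [abs_lt]; omega
    rw [Matrix.sub_apply, hP, hPt]
    exact_mod_cast norm_sub_tsum_ite_intCast_le (N := N) (T := N + M) le_self_add
      (fun ν hν => by rw [haN, if_neg (not_le.mpr hν)]) haN_le (fun ν => by rw [hm_even]) hjk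
  calc traceNorm (P - Pt) ≤ ∑ j, ∑ k, ‖(P - Pt) j k‖ := traceNorm_le_sum_norm _
    _ ≤ ∑ j : Fin N, ∑ k : Fin N, (C * m (j - k + (N + M)) + C * m (-(j - k) + (N + M))) :=
        sum_le_sum fun j _ => sum_le_sum fun k _ => hentry j k
    _ = 2 * C * ∑ j : Fin N, ∑ k : Fin N, m (j - k + (N + M)) := by
        simp only [neg_sub, sum_add_distrib, ← mul_sum]
        rw [sum_comm (f := fun j k : Fin N => m (k - j + (N + M)))]
        ring
    _ ≤ 2 * C * ∑' k : ℕ, ((k : ℝ) + 1) * m ((M : ℤ) + (k : ℤ)) :=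
        mul_le_mul_of_nonneg_left
          (sum_fin_sum_fin_sub_add_le_tsum hm (summable_succ_mul_comp_add hm hm_sum M))
          (by positivity)

/-- With `|a ν| ≤ C m(ν)`, `m` positive, even and `(1+|ν|)m ∈ ℓ¹`,
the Toeplitz matrix `P_N(j,k) = a^N_{j-k}` (`a^N = 1_{[-N,N]} a`) and its periodized
version `P̃_N(j,k) = ∑_{ν ≡ j-k mod (N+M)} a^N_ν` satisfy
`‖P_N - P̃_N‖_tr ≤ 2C ∑_{k ≥ M} (k+1-M) m(k)`, uniformly in `N`. -/
theorem statement_3 (N M : ℕ) (hM : 1 ≤ M) (a : ℤ → ℂ) (m : ℤ → ℝ) (C : ℝ)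
    (hm_pos : ∀ ν, 0 < m ν) (hm_even : ∀ ν, m (-ν) = m ν)
    (hm_sum : Summable fun ν : ℤ => (1 + |(ν : ℝ)|) * m ν)
    (ha : ∀ ν, ‖a ν‖ ≤ C * m ν)
    (aN : ℤ → ℂ) (haN : ∀ ν : ℤ, aN ν = if |ν| ≤ (N : ℤ) then a ν else 0)
    (P : Matrix (Fin N) (Fin N) ℂ)
    (hP : ∀ j k : Fin N, P j k = aN ((j : ℤ) - (k : ℤ)))
    (Pt : Matrix (Fin N) (Fin N) ℂ)
    (hPt : ∀ j k : Fin N, Pt j k =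
      ∑' ν : ℤ, if (ν : ZMod (N + M)) = (((j : ℤ) - (k : ℤ) : ℤ) : ZMod (N + M))
        then aN ν else 0) :
    traceNorm (P - Pt) ≤ 2 * C * ∑' k : ℕ, ((k : ℝ) + 1) * m ((M : ℤ) + (k : ℤ)) :=
  statement_3_general N M a m C hm_pos hm_even hm_sum ha aN haN P hP Pt hPt
end

section
/- (Composition of Grushin problems) Let $\mathcal{H}_1, \mathcal{H}_2, \mathcal{H}_\pm, \mathcal{S}_\pm$ be Banach spaces. Suppose the block operator $\mathcal{P} = \begin{pmatrix} P & R_- \\ R_+ & R_{+-} \end{pmatrix} : \mathcal{H}_1 \times \mathcal{H}_- \to \mathcal{H}_2 \times \mathcal{H}_+$ is bijective with bounded inverse $\mathcal{E} = \begin{pmatrix} E & E_+ \\ E_- & E_{-+} \end{pmatrix}$, and suppose $\mathcal{S} = \begin{pmatrix} E_{-+} & S_- \\ S_+ & 0 \end{pmatrix} : \mathcal{H}_+ \times \mathcal{S}_- \to \mathcal{H}_- \times \mathcal{S}_+$ is bijective with bounded inverse $\mathcal{F} = \begin{pmatrix} F & F_+ \\ F_- & F_{-+} \end{pmatrix}$.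 Then $\mathcal{T} = \begin{pmatrix} P & R_- S_- \\ S_+ R_+ & S_+ R_{+-} S_- \end{pmatrix} : \mathcal{H}_1 \times \mathcal{S}_- \to \mathcal{H}_2 \times \mathcal{S}_+$ is bijective with bounded inverse $\mathcal{G} = \begin{pmatrix} E - E_+ F E_- & E_+ F_+ \\ F_- E_- & -F_{-+} \end{pmatrix}$. -/
open ContinuousLinearMap

/-- The block operator `(u, u₋) ↦ (P u + R₋ u₋, R₊ u + R₊₋ u₋)` built from four
bounded operators. -/
noncomputable def blockCLM {H1 H2 Hm Hp : Type*}
    [NormedAddCommGroup H1] [NormedSpace ℂ H1] [NormedAddCommGroup H2] [NormedSpace ℂ H2]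
    [NormedAddCommGroup Hm] [NormedSpace ℂ Hm] [NormedAddCommGroup Hp] [NormedSpace ℂ Hp]
    (P : H1 →L[ℂ] H2) (Rm : Hm →L[ℂ] H2) (Rp : H1 →L[ℂ] Hp) (Rpm : Hm →L[ℂ] Hp) :
    (H1 × Hm) →L[ℂ] (H2 × Hp) :=
  (P.comp (fst ℂ H1 Hm) + Rm.comp (snd ℂ H1 Hm)).prod
    (Rp.comp (fst ℂ H1 Hm) + Rpm.comp (snd ℂ H1 Hm))

/-- composition of Grushin problems. If the block operator
`𝓟 = [[P, R₋],[R₊, R₊₋]] : H1 × H₋ → H2 × H₊` is bijective with bounded inverse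
`𝓔 = [[E, E₊],[E₋, E₋₊]]`, and `𝓢 = [[E₋₊, S₋],[S₊, 0]] : H₊ × 𝒮₋ → H₋ × 𝒮₊` is
bijective with bounded inverse `𝓕 = [[F, F₊],[F₋, F₋₊]]`, then
`𝓣 = [[P, R₋S₋],[S₊R₊, S₊R₊₋S₋]] : H1 × 𝒮₋ → H2 × 𝒮₊` is bijective with bounded
inverse `𝓖 = [[E - E₊FE₋, E₊F₊],[F₋E₋, -F₋₊]]`. -/
theorem statement_6 {H1 H2 Hm Hp Sm Sp : Type*}
    [NormedAddCommGroup H1] [NormedSpace ℂ H1] [NormedAddCommGroup H2] [NormedSpace ℂ H2]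
    [NormedAddCommGroup Hm] [NormedSpace ℂ Hm] [NormedAddCommGroup Hp] [NormedSpace ℂ Hp]
    [NormedAddCommGroup Sm] [NormedSpace ℂ Sm] [NormedAddCommGroup Sp] [NormedSpace ℂ Sp]
    (P : H1 →L[ℂ] H2) (Rm : Hm →L[ℂ] H2) (Rp : H1 →L[ℂ] Hp) (Rpm : Hm →L[ℂ] Hp)
    (E : H2 →L[ℂ] H1) (Ep : Hp →L[ℂ] H1) (Em : H2 →L[ℂ] Hm) (Emp : Hp →L[ℂ] Hm)
    (Sminus : Sm →L[ℂ] Hm) (Splus : Hp →L[ℂ] Sp)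
    (F : Hm →L[ℂ] Hp) (Fp : Sp →L[ℂ] Hp) (Fm : Hm →L[ℂ] Sm) (Fmp : Sp →L[ℂ] Sm)
    (hPE : (blockCLM P Rm Rp Rpm).comp (blockCLM E Ep Em Emp) = ContinuousLinearMap.id ℂ _)
    (hEP : (blockCLM E Ep Em Emp).comp (blockCLM P Rm Rp Rpm) = ContinuousLinearMap.id ℂ _)
    (hSF : (blockCLM Emp Sminus Splus 0).comp (blockCLM F Fp Fm Fmp) = ContinuousLinearMap.id ℂ _)
    (hFS : (blockCLM F Fp Fm Fmp).comp (blockCLM Emp Sminus Splus 0) = ContinuousLinearMap.id ℂ _) :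
    (blockCLM P (Rm.comp Sminus) (Splus.comp Rp) ((Splus.comp Rpm).comp Sminus)).comp
        (blockCLM (E - (Ep.comp F).comp Em) (Ep.comp Fp) (Fm.comp Em) (-Fmp))
      = ContinuousLinearMap.id ℂ _ ∧
    (blockCLM (E - (Ep.comp F).comp Em) (Ep.comp Fp) (Fm.comp Em) (-Fmp)).comp
        (blockCLM P (Rm.comp Sminus) (Splus.comp Rp) ((Splus.comp Rpm).comp Sminus))
      = ContinuousLinearMap.id ℂ _ := by

  have h1 := fun (x : H2) => DFunLike.congr_fun hPE (x, 0)
  have h2 := fun (y : Hp) => DFunLike.congr_fun hPE ((0 : H2), y)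
  have h3 := fun (x : H1) => DFunLike.congr_fun hEP (x, 0)
  have h4 := fun (y : Hm) => DFunLike.congr_fun hEP ((0 : H1), y)
  have h5 := fun (x : Hm) => DFunLike.congr_fun hSF (x, 0)
  have h6 := fun (y : Sp) => DFunLike.congr_fun hSF ((0 : Hm), y)
  have h7 := fun (x : Hp) => DFunLike.congr_fun hFS (x, 0)
  have h8 := fun (y : Sm) => DFunLike.congr_fun hFS ((0 : Hp), y)
  simp only [blockCLM, comp_apply, prod_apply, add_apply, coe_fst', coe_snd', coe_id', id_eq,
    map_zero, add_zero, zero_add, zero_apply, Prod.mk.injEq] at h1 h2 h3 h4 h5 h6 h7 h8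
  constructor
  · refine ContinuousLinearMap.ext fun z => ?_
    obtain ⟨x, s⟩ := z
    simp only [blockCLM, comp_apply, prod_apply, add_apply, coe_fst', coe_snd', coe_id', id_eq,
        sub_apply, neg_apply, map_add, map_sub, map_neg, zero_apply, Prod.mk.injEq]
    have d := congrArg Rm (h5 (Em x)).1
    have e := congrArg Rm (h6 s).1
    have d2 := congrArg (fun w => Splus (Rpm w)) (h5 (Em x)).1
    have e2 := congrArg (fun w => Splus (Rpm w)) (h6 s).1
    have b2 := congrArg Splus (h2 (F (Em x))).2
    have c2 := congrArg Splus (h2 (Fp s)).2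
    have a2 := congrArg Splus (h1 x).2
    simp only [map_add, map_zero] at d e d2 e2 a2 b2 c2
    constructor
    · linear_combination (norm := module) (h1 x).1 - (h2 (F (Em x))).1 + (h2 (Fp s)).1 + d - e
    · linear_combination (norm := module) a2 - b2 + c2 + d2 - e2 - (h5 (Em x)).2 + (h6 s).2
  · refine ContinuousLinearMap.ext fun z => ?_
    obtain ⟨x, s⟩ := z
    simp only [blockCLM, comp_apply, prod_apply, add_apply, coe_fst', coe_snd', coe_id', id_eq,
        sub_apply, neg_apply, map_add, map_sub, map_neg, zero_apply, Prod.mk.injEq]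
    have a := congrArg (fun w => Ep (F w)) (h3 x).2
    have b := congrArg (fun w => Ep (F w)) (h4 (Sminus s)).2
    have c := congrArg Ep (h7 (Rp x)).1
    have d := congrArg Ep (h7 (Rpm (Sminus s))).1
    have e := congrArg Ep (h8 s).1
    have a2 := congrArg Fm (h3 x).2
    have b2 := congrArg Fm (h4 (Sminus s)).2
    simp only [map_add, map_zero] at a b c d e a2 b2
    constructor
    · linear_combination (norm := module) (h3 x).1 + (h4 (Sminus s)).1 - a - b + c + d - e
    · linear_combination (norm := module) a2 + b2 - (h7 (Rp x)).2 - (h7 (Rpm (Sminus s))).2 + (h8 s).2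
end

section
/- Let $\mathcal{T}$ be an invertible matrix (or invertible operator with trace-class perturbation) with $\|\mathcal{T}^{-1}\| \le C$, and let $\mathcal{T}^\delta$ satisfy $\|\mathcal{T} - \mathcal{T}^\delta\|_{\mathrm{tr}} \le \delta \|Q\|_{\mathrm{tr}}$ with $C\delta\|Q\|_{\mathrm{tr}} \le 1/2$. Then $\big| \ln|\det \mathcal{T}^\delta| - \ln|\det \mathcal{T}| \big| \le 2C\delta \|Q\|_{\mathrm{tr}}$. -/
open scoped Matrix.Norms.L2Operator

/-!
Write `Tδ = T (1 - T⁻¹ (T - Tδ))`. For any `X` and `F`, conjugating `1 + X F` by the unitary `V`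
of right singular vectors of `F` turns its `i`-th column into `eᵢ + (V⋆ X) (F V eᵢ)`, of norm at
most `1 + ‖X‖ σᵢ(F)`; Hadamard's inequality then gives
`|det (1 + X F)| ≤ ∏ (1 + ‖X‖ σᵢ) ≤ exp (‖X‖ ‖F‖_tr)`, which bounds `|det Tδ| / |det T|` by
`exp (C δ ‖Q‖_tr)`. As `‖T⁻¹ (T - Tδ)‖ ≤ ‖T⁻¹‖ ‖T - Tδ‖_tr ≤ 1/2`, a Neumann series shows that
`Tδ` is invertible with `‖Tδ⁻¹‖ ≤ 2C`, and exchanging the roles of `T` and `Tδ` gives the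
reverse bound with constant `2C`.
-/

lemma Real.prod_le_exp_sum_sub_one {α : Type*} {s : Finset α} {f : α → ℝ}
    (hf : ∀ i ∈ s, 0 ≤ f i) : ∏ i ∈ s, f i ≤ Real.exp (∑ i ∈ s, (f i - 1)) := by
  rw [Real.exp_sum]
  exact Finset.prod_le_prod hf fun i _ => by linarith [Real.add_one_le_exp (f i - 1)]

lemma Real.log_le_log_add_of_le_mul_exp {a b x : ℝ} (ha : 0 < a) (h : a ≤ b * Real.exp x) :
    Real.log a ≤ Real.log b + x := by
  have hb : 0 < b := pos_of_mul_pos_left (ha.trans_le h) (Real.exp_pos x).le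
  calc Real.log a ≤ Real.log (b * Real.exp x) := Real.log_le_log ha h
    _ = Real.log b + x := by rw [Real.log_mul hb.ne' (Real.exp_pos x).ne', Real.log_exp]

namespace Matrix

variable {𝕜 ι : Type*} [RCLike 𝕜] [Fintype ι] [DecidableEq ι]

noncomputable def euclideanCol (M : Matrix ι ι 𝕜) (i : ι) : EuclideanSpace 𝕜 ι :=
  WithLp.toLp 2 fun j => M j i

omit [DecidableEq ι] in
lemma norm_euclideanCol_sq (M : Matrix ι ι 𝕜) (i : ι) :
    ‖M.euclideanCol i‖ ^ 2 = RCLike.re ((Mᴴ * M) i i) := by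
  rw [EuclideanSpace.norm_sq_eq, mul_apply, map_sum]
  refine Finset.sum_congr rfl fun j _ => ?_
  rw [conjTranspose_apply, RCLike.star_def, RCLike.conj_mul, ← RCLike.ofReal_pow, RCLike.ofReal_re]
  rfl

lemma euclideanCol_mul (X Y : Matrix ι ι 𝕜) (i : ι) :
    (X * Y).euclideanCol i = toEuclideanCLM (n := ι) (𝕜 := 𝕜) X (Y.euclideanCol i) := by
  ext j
  simp [euclideanCol, mul_apply, mulVec, dotProduct]

omit [Fintype ι] in
lemma euclideanCol_one_add (B : Matrix ι ι 𝕜) (i : ι) :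
    (1 + B).euclideanCol i = EuclideanSpace.single i 1 + B.euclideanCol i := by
  ext j
  simp [euclideanCol, one_apply, eq_comm]

lemma euclideanCol_mul_diagonal (M : Matrix ι ι 𝕜) (w : ι → 𝕜) (i : ι) :
    (M * diagonal w).euclideanCol i = w i • M.euclideanCol i := by
  ext j
  simp [euclideanCol, mul_comm]

lemma norm_euclideanCol_mul_le (X Y : Matrix ι ι 𝕜) (i : ι) :
    ‖(X * Y).euclideanCol i‖ ≤ ‖X‖ * ‖Y.euclideanCol i‖ := by
  rw [euclideanCol_mul]
  exact ContinuousLinearMap.le_opNorm _ _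

lemma sum_eigenvalues_conjTranspose_mul_self (M : Matrix ι ι 𝕜) :
    ∑ i, (isHermitian_conjTranspose_mul_self M).eigenvalues i = ∑ i, ‖M.euclideanCol i‖ ^ 2 := by
  have h := congrArg RCLike.re (isHermitian_conjTranspose_mul_self M).trace_eq_sum_eigenvalues
  simp only [trace, diag, map_sum, RCLike.ofReal_re] at h
  simp only [norm_euclideanCol_sq, h]

lemma norm_det_sq_eq_prod_eigenvalues (M : Matrix ι ι 𝕜) :
    ‖M.det‖ ^ 2 = ∏ i, (isHermitian_conjTranspose_mul_self M).eigenvalues i := by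
  have h := (isHermitian_conjTranspose_mul_self M).det_eq_prod_eigenvalues
  rw [det_mul, det_conjTranspose, RCLike.star_def, RCLike.conj_mul, ← RCLike.ofReal_prod] at h
  exact_mod_cast h

lemma norm_det_le_one_of_norm_euclideanCol_le_one {N : Matrix ι ι 𝕜}
    (h : ∀ i, ‖N.euclideanCol i‖ ≤ 1) : ‖N.det‖ ≤ 1 := by
  set ev := (isHermitian_conjTranspose_mul_self N).eigenvalues
  have hsq : ‖N.det‖ ^ 2 ≤ 1 := calc
    ‖N.det‖ ^ 2 = ∏ i, ev i := norm_det_sq_eq_prod_eigenvalues N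
    _ ≤ Real.exp (∑ i, (ev i - 1)) := Real.prod_le_exp_sum_sub_one fun i _ =>
        eigenvalues_conjTranspose_mul_self_nonneg N i
    _ ≤ Real.exp 0 := by
      rw [Finset.sum_sub_distrib, sum_eigenvalues_conjTranspose_mul_self, ← Finset.sum_sub_distrib]
      gcongr
      exact Finset.sum_nonpos fun i _ => by nlinarith [h i, norm_nonneg (N.euclideanCol i)]
    _ = 1 := Real.exp_zero
  exact (pow_le_one_iff_of_nonneg (norm_nonneg _) two_ne_zero).mp hsq

/-- Hadamard's inequality. -/
theorem norm_det_le_prod_of_norm_euclideanCol_le {M : Matrix ι ι 𝕜} {w : ι → ℝ}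
    (hw : ∀ i, 0 < w i) (h : ∀ i, ‖M.euclideanCol i‖ ≤ w i) : ‖M.det‖ ≤ ∏ i, w i := by
  have hN : ‖(M * diagonal fun i => ((w i)⁻¹ : 𝕜)).det‖ ≤ 1 :=
    norm_det_le_one_of_norm_euclideanCol_le_one fun i => by
      rw [euclideanCol_mul_diagonal, norm_smul, norm_inv, RCLike.norm_ofReal, abs_of_pos (hw i)]
      exact inv_mul_le_one_of_le₀ (h i) (hw i).le
  have hprod : 0 < ∏ i, w i := Finset.prod_pos fun i _ => hw i
  rw [det_mul, det_diagonal, norm_mul, norm_prod] at hN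
  simp only [norm_inv, RCLike.norm_ofReal, abs_of_pos (hw _), Finset.prod_inv_distrib] at hN
  rwa [← div_eq_mul_inv, div_le_one hprod] at hN

lemma norm_euclideanCol_mul_eigenvectorUnitary (F : Matrix ι ι 𝕜) (i : ι) :
    ‖(F * (isHermitian_conjTranspose_mul_self F).eigenvectorUnitary).euclideanCol i‖ =
      √((isHermitian_conjTranspose_mul_self F).eigenvalues i) := by
  set hF := isHermitian_conjTranspose_mul_self F
  set V : Matrix ι ι 𝕜 := (hF.eigenvectorUnitary : Matrix ι ι 𝕜)
  have hdiag : (F * V)ᴴ * (F * V) = diagonal (RCLike.ofReal ∘ hF.eigenvalues) := by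
    rw [← hF.conjStarAlgAut_star_eigenvectorUnitary, Unitary.conjStarAlgAut_star_apply,
      conjTranspose_mul, ← star_eq_conjTranspose]
    noncomm_ring
  rw [← Real.sqrt_sq (norm_nonneg _), norm_euclideanCol_sq, hdiag]
  simp

lemma l2_opNorm_one_le : ‖(1 : Matrix ι ι 𝕜)‖ ≤ 1 := by
  rw [cstar_norm_def, map_one, ContinuousLinearMap.one_def]
  exact ContinuousLinearMap.norm_id_le

lemma norm_inv_one_sub_le {A : Matrix ι ι 𝕜} (hA : ‖A‖ < 1) :
    ‖(1 - A)⁻¹‖ ≤ (1 - ‖A‖)⁻¹ := by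
  have : CompleteSpace (Matrix ι ι 𝕜) := FiniteDimensional.complete 𝕜 _
  have hdet : IsUnit (1 - A).det :=
    (isUnit_iff_isUnit_det _).mp (isUnit_one_sub_of_norm_lt_one hA)
  set B := (1 - A)⁻¹
  have hB : B = 1 + A * B := by
    have := mul_nonsing_inv (1 - A) hdet
    rw [sub_mul, one_mul] at this
    rw [← this]; abel
  have : ‖B‖ ≤ 1 + ‖A‖ * ‖B‖ := calc
    ‖B‖ ≤ ‖(1 : Matrix ι ι 𝕜)‖ + ‖A * B‖ := by
      conv_lhs => rw [hB]
      exact norm_add_le _ _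
    _ ≤ 1 + ‖A‖ * ‖B‖ := add_le_add l2_opNorm_one_le (l2_opNorm_mul _ _)
  rw [← one_div, le_div_iff₀ (sub_pos.2 hA)]
  linarith

theorem isUnit_and_norm_inv_le_of_norm_inv_mul_norm_sub_le {T S : Matrix ι ι 𝕜} (hT : IsUnit T)
    (h : ‖T⁻¹‖ * ‖T - S‖ ≤ 1 / 2) : IsUnit S ∧ ‖S⁻¹‖ ≤ 2 * ‖T⁻¹‖ := by
  have : CompleteSpace (Matrix ι ι 𝕜) := FiniteDimensional.complete 𝕜 _
  set A := T⁻¹ * (T - S)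
  have hA : ‖A‖ ≤ 1 / 2 := (l2_opNorm_mul _ _).trans h
  have hS : S = T * (1 - A) := by
    rw [mul_sub, mul_one, ← mul_assoc, mul_nonsing_inv T ((isUnit_iff_isUnit_det T).mp hT), one_mul,
      sub_sub_cancel]
  have hunit : IsUnit (1 - A) := isUnit_one_sub_of_norm_lt_one (by linarith)
  refine ⟨hS ▸ hT.mul hunit, ?_⟩
  calc ‖S⁻¹‖ = ‖(1 - A)⁻¹ * T⁻¹‖ := by rw [hS, mul_inv_rev]
    _ ≤ ‖(1 - A)⁻¹‖ * ‖T⁻¹‖ := l2_opNorm_mul _ _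
    _ ≤ 2 * ‖T⁻¹‖ := by
      gcongr
      calc ‖(1 - A)⁻¹‖ ≤ (1 - ‖A‖)⁻¹ := norm_inv_one_sub_le (by linarith)
        _ ≤ 2 := by rw [inv_le_comm₀ (by linarith) two_pos]; linarith

end Matrix

section traceNorm

open Matrix

variable {n : ℕ}

lemma traceNorm_nonneg (A : Matrix (Fin n) (Fin n) ℂ) : 0 ≤ traceNorm A :=
  Finset.sum_nonneg fun _ _ => Real.sqrt_nonneg _

lemma traceNorm_neg (A : Matrix (Fin n) (Fin n) ℂ) : traceNorm (-A) = traceNorm A := by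
  simp only [traceNorm, conjTranspose_neg, neg_mul_neg]

lemma l2_opNorm_le_traceNorm (F : Matrix (Fin n) (Fin n) ℂ) : ‖F‖ ≤ traceNorm F := by
  set hF := isHermitian_conjTranspose_mul_self F
  have hsq : ‖F‖ ^ 2 ≤ traceNorm F ^ 2 := by
    rw [sq, ← l2_opNorm_conjTranspose_mul_self, hF.spectral_theorem, Unitary.conjStarAlgAut_apply,
      mul_assoc, CStarRing.norm_coe_unitary_mul, ← Unitary.coe_star, CStarRing.norm_mul_coe_unitary,
      l2_opNorm_diagonal]
    refine (pi_norm_le_iff_of_nonneg (sq_nonneg _)).2 fun i => ?_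
    have hev := eigenvalues_conjTranspose_mul_self_nonneg F i
    calc ‖(RCLike.ofReal ∘ hF.eigenvalues) i‖ = √(hF.eigenvalues i) ^ 2 := by
          simp [Real.sq_sqrt hev, abs_of_nonneg hev]
      _ ≤ traceNorm F ^ 2 := by
          gcongr
          exact Finset.single_le_sum (f := fun j => √(hF.eigenvalues j))
            (fun _ _ => Real.sqrt_nonneg _) (Finset.mem_univ i)
  exact (pow_le_pow_iff_left₀ (norm_nonneg F) (traceNorm_nonneg F) two_ne_zero).mp hsq

theorem norm_det_one_add_mul_le (X F : Matrix (Fin n) (Fin n) ℂ) :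
    ‖(1 + X * F).det‖ ≤ Real.exp (‖X‖ * traceNorm F) := by
  set hF := isHermitian_conjTranspose_mul_self F
  set V : Matrix (Fin n) (Fin n) ℂ := (hF.eigenvectorUnitary : Matrix (Fin n) (Fin n) ℂ)
  have hV : V ∈ unitary _ := hF.eigenvectorUnitary.2
  set d := fun i => √(hF.eigenvalues i)
  have hconj : (1 + X * F).det = (1 + (star V * X) * (F * V)).det := by
    rw [det_one_add_mul_comm (star V * X), mul_assoc F, ← mul_assoc V,
      Unitary.mul_star_self_of_mem hV, one_mul, det_one_add_mul_comm F]
  have hcol : ∀ i, ‖(1 + (star V * X) * (F * V)).euclideanCol i‖ ≤ 1 + ‖X‖ * d i := fun i => calc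
    _ ≤ ‖EuclideanSpace.single i (1 : ℂ)‖ + ‖((star V * X) * (F * V)).euclideanCol i‖ := by
        rw [euclideanCol_one_add]
        exact norm_add_le _ _
    _ ≤ 1 + ‖star V * X‖ * ‖(F * V).euclideanCol i‖ := by
        simp only [PiLp.norm_single, norm_one]
        gcongr
        exact norm_euclideanCol_mul_le _ _ i
    _ = 1 + ‖X‖ * d i := by
        rw [CStarRing.norm_mem_unitary_mul X (Unitary.star_mem hV),
          norm_euclideanCol_mul_eigenvectorUnitary]
  calc ‖(1 + X * F).det‖ ≤ ∏ i, (1 + ‖X‖ * d i) := by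
        rw [hconj]
        exact norm_det_le_prod_of_norm_euclideanCol_le (fun i => by positivity) hcol
    _ ≤ ∏ i, Real.exp (‖X‖ * d i) := Finset.prod_le_prod (fun i _ => by positivity)
        fun i _ => by linarith [Real.add_one_le_exp (‖X‖ * d i)]
    _ = Real.exp (‖X‖ * traceNorm F) := by rw [← Real.exp_sum, ← Finset.mul_sum]; rfl

theorem norm_det_le_norm_det_mul_exp {S R : Matrix (Fin n) (Fin n) ℂ} (hS : IsUnit S) :
    ‖R.det‖ ≤ ‖S.det‖ * Real.exp (‖S⁻¹‖ * traceNorm (S - R)) := by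
  have hR : R = S * (1 + (-S⁻¹) * (S - R)) := by
    rw [mul_add, mul_one, neg_mul, mul_neg, ← mul_assoc,
      mul_nonsing_inv S ((isUnit_iff_isUnit_det S).mp hS), one_mul]
    abel
  calc ‖R.det‖ = ‖S.det‖ * ‖(1 + (-S⁻¹) * (S - R)).det‖ := by
        conv_lhs => rw [hR]
        rw [det_mul, norm_mul]
    _ ≤ ‖S.det‖ * Real.exp (‖S⁻¹‖ * traceNorm (S - R)) := by
        gcongr
        simpa only [norm_neg] using norm_det_one_add_mul_le (-S⁻¹) (S - R)

end traceNorm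

theorem statement_13_general {n : ℕ} (T Tδ : Matrix (Fin n) (Fin n) ℂ) (C δ Qtr : ℝ)
    (hT : IsUnit T) (hTinv : ‖T⁻¹‖ ≤ C)
    (hdiff : traceNorm (T - Tδ) ≤ δ * Qtr)
    (hsmall : C * (δ * Qtr) ≤ 1 / 2) :
    |Real.log (‖Tδ.det‖) - Real.log (‖T.det‖)| ≤ 2 * C * (δ * Qtr) := by
  have hC : 0 ≤ C := (norm_nonneg _).trans hTinv
  have hpert : ‖T⁻¹‖ * traceNorm (T - Tδ) ≤ C * (δ * Qtr) :=
    mul_le_mul hTinv hdiff (traceNorm_nonneg _) hC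
  have hpert_nonneg : 0 ≤ C * (δ * Qtr) :=
    (mul_nonneg (norm_nonneg _) (traceNorm_nonneg _)).trans hpert
  obtain ⟨hTδ, hTδinv⟩ := Matrix.isUnit_and_norm_inv_le_of_norm_inv_mul_norm_sub_le hT
    (((mul_le_mul_of_nonneg_left (l2_opNorm_le_traceNorm _) (norm_nonneg _)).trans hpert).trans
      hsmall)
  have hdet_pos : ∀ {S : Matrix (Fin n) (Fin n) ℂ}, IsUnit S → 0 < ‖S.det‖ := fun hS =>
    norm_pos_iff.2 ((Matrix.isUnit_iff_isUnit_det _).mp hS).ne_zero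
  have hTδ_le : Real.log ‖Tδ.det‖ ≤ Real.log ‖T.det‖ + C * (δ * Qtr) :=
    Real.log_le_log_add_of_le_mul_exp (hdet_pos hTδ) <|
      (norm_det_le_norm_det_mul_exp hT).trans
        (mul_le_mul_of_nonneg_left (Real.exp_le_exp.2 hpert) (norm_nonneg _))
  have hT_le : Real.log ‖T.det‖ ≤ Real.log ‖Tδ.det‖ + 2 * C * (δ * Qtr) := by
    refine Real.log_le_log_add_of_le_mul_exp (hdet_pos hT) <|
      (norm_det_le_norm_det_mul_exp hTδ).trans ?_
    rw [← neg_sub, traceNorm_neg]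
    refine mul_le_mul_of_nonneg_left (Real.exp_le_exp.2 ?_) (norm_nonneg _)
    exact mul_le_mul (hTδinv.trans (by linarith)) hdiff (traceNorm_nonneg _) (by linarith)
  rw [abs_le]
  constructor <;> linarith

/-- If `𝓣` is invertible with `‖𝓣⁻¹‖ ≤ C`, and
`‖𝓣 - 𝓣^δ‖_tr ≤ δ ‖Q‖_tr` with `C δ ‖Q‖_tr ≤ 1/2`, then
`| ln|det 𝓣^δ| - ln|det 𝓣| | ≤ 2 C δ ‖Q‖_tr`. -/
theorem statement_13 {n : ℕ} (T Tδ : Matrix (Fin n) (Fin n) ℂ) (C δ Qtr : ℝ)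
    (hC : 0 ≤ C) (hδ : 0 ≤ δ) (hQtr : 0 ≤ Qtr)
    (hT : IsUnit T) (hTinv : ‖T⁻¹‖ ≤ C)
    (hdiff : traceNorm (T - Tδ) ≤ δ * Qtr)
    (hsmall : C * (δ * Qtr) ≤ 1 / 2) :
    |Real.log (‖Tδ.det‖) - Real.log (‖T.det‖)| ≤ 2 * C * (δ * Qtr) :=
  statement_13_general T Tδ C δ Qtr hT hTinv hdiff hsmall
end
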